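/- Let Γ = ⟨A,R⟩ be finite, σ a semantics assigning to each framework a set of extensions, a ∈ A, and ρ: A → [0,1]. Then PROB(a, σ, Γ) = Σ_{E ∈ Ext_σ(Γ), a∈E} ρ(E) equals the weighted model count, with weights ρ on positive literals and 1−ρ on negative literals, of the theory φ_σ ∧ a, where φ_σ is the disjunction over extensions E of the conjunction of members of E and negations of non-members. -/

import Mathlib

open Finset

/-- weight of a set of arguments under independent labelling ρ -/
noncomputable def wt {α : Type*} [Fintype α] [DecidableEq α] (ρ : α → ℝ) (S : Finset α) : ℝ :=
  (∏ b ∈ S, ρ b) * ∏ b ∈ Sᶜ, (1 - ρ b)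

open Classical in
/-- PROB(a, σ, Γ): sum of ρ(E) over σ-extensions E containing a -/
noncomputable def PROB {α : Type*} [Fintype α] [DecidableEq α]
    (ext : Finset (Finset α)) (ρ : α → ℝ) (a : α) : ℝ :=
  ∑ E ∈ ext.filter (fun E => a ∈ E), wt ρ E

/-- weight of a total truth assignment: ρ(x) for positive literals, 1 − ρ(x) for negative -/
noncomputable def wmodel {α : Type*} [Fintype α] (ρ : α → ℝ) (v : α → Bool) : ℝ :=
  ∏ x : α, if v x then ρ x else 1 - ρ x

/-- satisfaction by `v` of φ_σ = ⋁_{E ∈ ext} (⋀_{b∈E} b ∧ ⋀_{b∉E} ¬b) -/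
def satPhi {α : Type*} (ext : Finset (Finset α)) (v : α → Bool) : Prop :=
  ∃ E ∈ ext, (∀ b ∈ E, v b = true) ∧ (∀ b ∉ E, v b = false)

open Classical in
/-- weighted model count of the theory φ_σ ∧ a -/
noncomputable def WMC {α : Type*} [Fintype α]
    (ext : Finset (Finset α)) (ρ : α → ℝ) (a : α) : ℝ :=
  ∑ v ∈ Finset.univ.filter (fun v : α → Bool => satPhi ext v ∧ v a = true), wmodel ρ v

/-!
A total assignment satisfies φ_σ exactly when it is the characteristic assignment of some
extension `E`, and the weight of that assignment is ρ(E). Hence the weighted model count of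
φ_σ ∧ a is the sum defining PROB, reindexed along this injection of extensions into
assignments.
-/

def charAssignment {α : Type*} [DecidableEq α] (E : Finset α) : α → Bool :=
  fun x => decide (x ∈ E)

section Assignments

variable {α : Type*} [DecidableEq α]

@[simp]
theorem charAssignment_apply (E : Finset α) (x : α) : charAssignment E x = decide (x ∈ E) :=
  rfl

theorem charAssignment_injective : Function.Injective (charAssignment (α := α)) := by
  intro E F h
  ext x
  simpa using congrFun h x

theorem satPhi_iff_exists_charAssignment (ext : Finset (Finset α)) (v : α → Bool) :
    satPhi ext v ↔ ∃ E ∈ ext, charAssignment E = v := by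
  refine exists_congr fun E => and_congr_right fun _ => ?_
  constructor
  · rintro ⟨h_mem, h_not_mem⟩
    funext x
    by_cases hx : x ∈ E <;> simp [hx, h_mem, h_not_mem]
  · rintro rfl
    exact ⟨fun x hx => by simp [hx], fun x hx => by simp [hx]⟩

theorem satPhi_and_iff_mem_map (ext : Finset (Finset α)) (a : α) (v : α → Bool) :
    satPhi ext v ∧ v a = true ↔
      v ∈ (ext.filter (a ∈ ·)).map ⟨charAssignment, charAssignment_injective⟩ := by
  simp only [mem_map, mem_filter, Function.Embedding.coeFn_mk, satPhi_iff_exists_charAssignment]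
  constructor
  · rintro ⟨⟨E, hE, rfl⟩, ha⟩
    exact ⟨E, ⟨hE, by simpa using ha⟩, rfl⟩
  · rintro ⟨E, ⟨hE, ha⟩, rfl⟩
    exact ⟨⟨E, hE, rfl⟩, by simpa using ha⟩

variable [Fintype α]

theorem wmodel_charAssignment (ρ : α → ℝ) (E : Finset α) :
    wmodel ρ (charAssignment E) = wt ρ E := by
  rw [wmodel, wt, ← prod_mul_prod_compl E]
  congr 1
  · exact prod_congr rfl fun x hx => by simp [hx]
  · exact prod_congr rfl fun x hx => by simp [mem_compl.mp hx]

end Assignments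

theorem stmt_18 {α : Type*} [Fintype α] [DecidableEq α]
    (ext : Finset (Finset α)) (ρ : α → ℝ) (a : α) :
    PROB ext ρ a = WMC ext ρ a := by
  simp only [WMC, satPhi_and_iff_mem_map, filter_univ_mem, sum_map, Function.Embedding.coeFn_mk,
    wmodel_charAssignment, PROB]
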